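/- arXiv:2211.07996 — 2 statements merged into one kernel-verified Lean document; each statement's English description precedes it below -/
import Mathlib

section
/- Fix integers r, s ≥ 1 and t ≥ 2. The map sending a t-core ρ ∈ Par_{r,s} to the tuple (a_0(ρ), a_1(ρ), ..., a_{t−1}(ρ)) is a bijection from the set of t-cores in Par_{r,s} to the set of tuples (a_0, ..., a_{t−1}) of integers satisfying 0 ≤ a_i ≤ n_i for all i and a_0 + a_1 + ... + a_{t−1} = r. -/
open Finset

/-- Partitions in the `r × s` rectangle: weakly decreasing `r`-tuples with parts at most `s`. -/
def IsRectPartition (r s : ℕ) (lam : Fin r → ℕ) : Prop :=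
  (∀ i j : Fin r, i ≤ j → lam j ≤ lam i) ∧ ∀ i, lam i ≤ s

/-- The beta-set `β(λ) = {λ_i + r − i : 1 ≤ i ≤ r}` (with 0-indexed `i`). -/
def betaSet (r : ℕ) (lam : Fin r → ℕ) : Finset ℕ :=
  Finset.image (fun i : Fin r => lam i + (r - 1 - (i : ℕ))) Finset.univ

/-- `λ` is a `t`-core: for every `b ∈ β(λ)` with `b ≥ t`, also `b − t ∈ β(λ)`. -/
def IsTCore (r t : ℕ) (lam : Fin r → ℕ) : Prop :=
  ∀ b ∈ betaSet r lam, t ≤ b → b - t ∈ betaSet r lam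

/-- `n_i = ⌊(r+s+t−1−i)/t⌋`. -/
def nres (r s t i : ℕ) : ℕ := (r + s + t - 1 - i) / t

/-- `a_i(λ) = #{b ∈ β(λ) : b ≡ i (mod t)}`. -/
def aCount (r t : ℕ) (lam : Fin r → ℕ) (i : ℕ) : ℕ :=
  ((betaSet r lam).filter fun b => b % t = i).card

/-- The justification `J(λ)`: in each residue class `i` mod `t`, the `a_i(λ)` smallest
nonnegative integers congruent to `i`. -/
def justification (r t : ℕ) (lam : Fin r → ℕ) : Finset ℕ :=
  (Finset.range t).biUnion fun i =>
    (Finset.range (aCount r t lam i)).image fun m => i + m * t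

/-- The size of the `t`-core of `λ`: `Σ_{b ∈ J(λ)} b − r(r−1)/2`. -/
def coreSize (r t : ℕ) (lam : Fin r → ℕ) : ℕ :=
  (∑ b ∈ justification r t lam, b) - r * (r - 1) / 2

lemma lower_closed_sub (T : Finset ℕ) (hT : ∀ m, m + 1 ∈ T → m ∈ T) :
    ∀ d m, m ∈ T → m - d ∈ T := by
  intro d
  induction d with
  | zero => simpa using fun m h => h
  | succ d ih =>
    intro m hm
    have h1 : m - d ∈ T := ih m hm
    rcases Nat.eq_zero_or_pos (m - d) with h0 | h0
    · have he : m - (d + 1) = 0 := by omega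
      rw [he]; rwa [h0] at h1
    · have he : m - d = (m - (d + 1)) + 1 := by omega
      exact hT _ (he ▸ h1)

lemma lower_eq_range (T : Finset ℕ) (hT : ∀ m, m + 1 ∈ T → m ∈ T) :
    T = Finset.range T.card := by
  rcases T.eq_empty_or_nonempty with h | h
  · simp [h]
  · have hM := T.max'_mem h
    have heq : T = Finset.range (T.max' h + 1) := by
      apply Finset.Subset.antisymm
      · intro x hx
        exact Finset.mem_range.2 (Nat.lt_succ_of_le (T.le_max' x hx))
      · intro j hj
        have hj' : j ≤ T.max' h := Nat.lt_succ_iff.1 (Finset.mem_range.1 hj)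
        have he : T.max' h - (T.max' h - j) = j := by omega
        exact he ▸ lower_closed_sub T hT _ _ hM
    rw [heq, Finset.card_range]

lemma betaFun_strictAnti {r s : ℕ} {lam : Fin r → ℕ} (h : IsRectPartition r s lam) :
    StrictAnti (fun i : Fin r => lam i + (r - 1 - (i : ℕ))) := by
  intro i j hij
  have h1 : lam j ≤ lam i := h.1 i j (le_of_lt hij)
  have h2 : (i : ℕ) < j := hij
  have h3 : (j : ℕ) < r := j.isLt
  simp only
  omega

lemma betaSet_card {r s : ℕ} {lam : Fin r → ℕ} (h : IsRectPartition r s lam) :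
    (betaSet r lam).card = r := by
  rw [betaSet, Finset.card_image_of_injective _ (betaFun_strictAnti h).injective,
    Finset.card_univ, Fintype.card_fin]

lemma betaSet_subset {r s : ℕ} {lam : Fin r → ℕ} (h : IsRectPartition r s lam) :
    betaSet r lam ⊆ Finset.range (r + s) := by
  intro b hb
  simp only [betaSet, Finset.mem_image, Finset.mem_univ, true_and] at hb
  obtain ⟨i, rfl⟩ := hb
  have h1 := h.2 i
  have h2 := i.isLt
  simp only [Finset.mem_range]
  omega

lemma strictMono_add_le {n : ℕ} {g : Fin n → ℕ} (hg : StrictMono g) :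
    ∀ (d : ℕ) (p q : Fin n), (p : ℕ) + d ≤ (q : ℕ) → g p + d ≤ g q := by
  intro d
  induction d with
  | zero =>
    intro p q h
    simpa using hg.monotone (Fin.le_def.2 (by omega))
  | succ d ih =>
    intro p q h
    have hq : 0 < (q : ℕ) := by omega
    have h1 : g p + d ≤ g ⟨(q : ℕ) - 1, by omega⟩ := ih p _ (by simp; omega)
    have h2 : g ⟨(q : ℕ) - 1, by omega⟩ < g q := hg (Fin.lt_def.2 (by simp; omega))
    omega

lemma tcore_filter {r t : ℕ} {lam : Fin r → ℕ} (hcore : IsTCore r t lam) (ht : 0 < t)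
    {i : ℕ} (hi : i < t) :
    (betaSet r lam).filter (fun b => b % t = i) =
      (Finset.range (aCount r t lam i)).image (fun m => i + m * t) := by
  set S := (betaSet r lam).filter (fun b => b % t = i) with hS
  have hrep : ∀ b ∈ S, b = i + (b / t) * t := by
    intro b hb
    have hbmod : b % t = i := (Finset.mem_filter.1 hb).2
    conv_lhs => rw [← Nat.mod_add_div' b t]
    rw [hbmod]
  set T := S.image (· / t) with hT
  have hTlow : ∀ m, m + 1 ∈ T → m ∈ T := by
    intro m hm
    obtain ⟨b, hbS, hbdiv⟩ := Finset.mem_image.1 hm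
    have hbeq : b = i + (m + 1) * t := by rw [hrep b hbS, hbdiv]
    have hbt : t ≤ b := by
      have : (m + 1) * t = m * t + t := by ring
      omega
    have hbm : b - t ∈ betaSet r lam := hcore b (Finset.mem_filter.1 hbS).1 hbt
    have hbsub : b - t = i + m * t := by
      have : (m + 1) * t = m * t + t := by ring
      omega
    have hmod2 : (b - t) % t = i := by
      rw [hbsub, Nat.add_mul_mod_self_right, Nat.mod_eq_of_lt hi]
    have hdiv2 : (b - t) / t = m := by
      rw [hbsub, Nat.add_mul_div_right _ _ ht, Nat.div_eq_of_lt hi]; omega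
    exact Finset.mem_image.2 ⟨b - t, Finset.mem_filter.2 ⟨hbm, hmod2⟩, hdiv2⟩
  have hinj : Set.InjOn (· / t) S := by
    intro b1 hb1 b2 hb2 hdiv
    rw [hrep b1 hb1, hrep b2 hb2]
    simp only at hdiv
    rw [hdiv]
  have hcardT : T.card = aCount r t lam i := by
    rw [hT, Finset.card_image_of_injOn hinj]
    rfl
  have hTrange : T = Finset.range (aCount r t lam i) := by
    rw [lower_eq_range T hTlow, hcardT]
  ext b
  constructor
  · intro hb
    refine Finset.mem_image.2 ⟨b / t, ?_, (hrep b hb).symm⟩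
    rw [← hTrange]
    exact Finset.mem_image.2 ⟨b, hb, rfl⟩
  · intro hb
    obtain ⟨m, hm, rfl⟩ := Finset.mem_image.1 hb
    rw [← hTrange] at hm
    obtain ⟨b', hb'S, hb'div⟩ := Finset.mem_image.1 hm
    have : b' = i + m * t := by rw [hrep b' hb'S, hb'div]
    exact this ▸ hb'S

lemma beta_injective {r s : ℕ} {lam mu : Fin r → ℕ} (hl : IsRectPartition r s lam)
    (hm : IsRectPartition r s mu) (h : betaSet r lam = betaSet r mu) : lam = mu := by
  have hcard : (betaSet r lam).card = r := betaSet_card hl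
  have hmono : ∀ (nu : Fin r → ℕ), IsRectPartition r s nu →
      StrictMono (fun k : Fin r => nu k.rev + (r - 1 - (k.rev : ℕ))) := by
    intro nu hnu k l hkl
    exact betaFun_strictAnti hnu (Fin.rev_lt_rev.2 hkl)
  have hmem1 : ∀ k : Fin r, lam k.rev + (r - 1 - (k.rev : ℕ)) ∈ betaSet r lam :=
    fun k => Finset.mem_image.2 ⟨k.rev, Finset.mem_univ _, rfl⟩
  have hmem2 : ∀ k : Fin r, mu k.rev + (r - 1 - (k.rev : ℕ)) ∈ betaSet r lam := by
    intro k
    rw [h]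
    exact Finset.mem_image.2 ⟨k.rev, Finset.mem_univ _, rfl⟩
  have h1 := Finset.orderEmbOfFin_unique hcard hmem1 (hmono lam hl)
  have h2 := Finset.orderEmbOfFin_unique hcard hmem2 (hmono mu hm)
  funext i
  have := congrFun (h1.trans h2.symm) i.rev
  simp only [Fin.rev_rev] at this
  omega

lemma beta_biUnion {r t : ℕ} (lam : Fin r → ℕ) (ht : 0 < t) :
    betaSet r lam =
      (Finset.range t).biUnion (fun i => (betaSet r lam).filter (fun b => b % t = i)) := by
  ext b
  simp only [Finset.mem_biUnion, Finset.mem_range, Finset.mem_filter]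
  constructor
  · intro hb
    exact ⟨b % t, Nat.mod_lt b ht, hb, rfl⟩
  · rintro ⟨i, _, hb, _⟩
    exact hb

/-- The map `ρ ↦ (a_0(ρ), …, a_{t−1}(ρ))` is a bijection from the set of
`t`-cores in `Par_{r,s}` onto the set of tuples `(a_0, …, a_{t−1})` with `0 ≤ a_i ≤ n_i`
and `a_0 + ⋯ + a_{t−1} = r`. -/
theorem tcore_aCount_bijection (r s t : ℕ) (hr : 1 ≤ r) (hs : 1 ≤ s) (ht : 2 ≤ t) :
    Set.BijOn (fun lam => fun i : Fin t => aCount r t lam (i : ℕ))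
      {lam : Fin r → ℕ | IsRectPartition r s lam ∧ IsTCore r t lam}
      {a : Fin t → ℕ | (∀ i : Fin t, a i ≤ nres r s t (i : ℕ)) ∧ ∑ i : Fin t, a i = r} := by
  have ht0 : 0 < t := by omega
  refine ⟨?_, ?_, ?_⟩
  · -- MapsTo
    rintro lam ⟨hrect, hcore⟩
    constructor
    · intro i
      show aCount r t lam (i : ℕ) ≤ nres r s t (i : ℕ)
      set a := aCount r t lam (i : ℕ) with ha
      rcases Nat.eq_zero_or_pos a with h0 | h0
      · omega
      · have hfil := tcore_filter hcore ht0 i.isLt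
        have hmem : (i : ℕ) + (a - 1) * t ∈ betaSet r lam := by
          have h1 : (i : ℕ) + (a - 1) * t ∈
              (betaSet r lam).filter (fun b => b % t = (i : ℕ)) := by
            rw [hfil]
            exact Finset.mem_image.2 ⟨a - 1, Finset.mem_range.2 (by omega), rfl⟩
          exact (Finset.mem_filter.1 h1).1
        have hlt : (i : ℕ) + (a - 1) * t < r + s :=
          Finset.mem_range.1 (betaSet_subset hrect hmem)
        rw [nres, Nat.le_div_iff_mul_le ht0]
        have hmul : (a - 1) * t = a * t - t := Nat.sub_one_mul a t
        have hmul2 : t ≤ a * t := Nat.le_mul_of_pos_left t h0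
        have hi := i.isLt
        omega
    · show (∑ i : Fin t, aCount r t lam (i : ℕ)) = r
      rw [Fin.sum_univ_eq_sum_range (fun i => aCount r t lam i)]
      have h1 := Finset.card_eq_sum_card_fiberwise
        (f := fun b => b % t) (s := betaSet r lam) (t := Finset.range t)
        (fun x _ => Finset.mem_range.2 (Nat.mod_lt x ht0))
      have h2 : (betaSet r lam).card = r := betaSet_card hrect
      exact h1.symm.trans h2
  · -- InjOn
    rintro lam ⟨hl, hlc⟩ mu ⟨hm, hmc⟩ heq
    have ha : ∀ i : Fin t, aCount r t lam (i : ℕ) = aCount r t mu (i : ℕ) :=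
      fun i => congrFun heq i
    have hbeta : betaSet r lam = betaSet r mu := by
      rw [beta_biUnion lam ht0, beta_biUnion mu ht0]
      apply Finset.biUnion_congr rfl
      intro i hi
      have hi' : i < t := Finset.mem_range.1 hi
      rw [tcore_filter hlc ht0 hi', tcore_filter hmc ht0 hi']
      have := ha ⟨i, hi'⟩
      simp only at this
      rw [this]
    exact beta_injective hl hm hbeta
  · -- SurjOn
    rintro a ⟨hbd, hsum⟩
    set B : Finset ℕ := Finset.univ.biUnion
      (fun i : Fin t => (Finset.range (a i)).image (fun m => (i : ℕ) + m * t)) with hB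
    have hmemB : ∀ b, b ∈ B ↔ ∃ i : Fin t, ∃ m, m < a i ∧ b = (i : ℕ) + m * t := by
      intro b
      simp only [hB, Finset.mem_biUnion, Finset.mem_univ, true_and, Finset.mem_image,
        Finset.mem_range]
      constructor
      · rintro ⟨i, m, hm, rfl⟩; exact ⟨i, m, hm, rfl⟩
      · rintro ⟨i, m, hm, rfl⟩; exact ⟨i, m, hm, rfl⟩
    have hmodB : ∀ (i : Fin t) (m : ℕ), ((i : ℕ) + m * t) % t = (i : ℕ) := by
      intro i m
      rw [Nat.add_mul_mod_self_right, Nat.mod_eq_of_lt i.isLt]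
    have hBsub : B ⊆ Finset.range (r + s) := by
      intro b hb
      obtain ⟨i, m, hm, rfl⟩ := (hmemB b).1 hb
      have hni : m + 1 ≤ nres r s t (i : ℕ) := by have := hbd i; omega
      have hmt : (m + 1) * t ≤ r + s + t - 1 - (i : ℕ) := by
        rw [nres] at hni
        exact (Nat.le_div_iff_mul_le ht0).1 hni
      have hexp : (m + 1) * t = m * t + t := by ring
      have hi := i.isLt
      exact Finset.mem_range.2 (by omega)
    have hinjm : ∀ i : Fin t, Function.Injective (fun m => (i : ℕ) + m * t) := by
      intro i m1 m2 h
      simp only at h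
      have : m1 * t = m2 * t := by omega
      exact Nat.eq_of_mul_eq_mul_right ht0 this
    have hBcard : B.card = r := by
      rw [hB, Finset.card_biUnion]
      · rw [← hsum]
        apply Finset.sum_congr rfl
        intro i _
        rw [Finset.card_image_of_injective _ (hinjm i), Finset.card_range]
      · intro i _ j _ hij
        simp only [Finset.disjoint_left]
        intro x hx hx2
        obtain ⟨m1, _, rfl⟩ := Finset.mem_image.1 hx
        obtain ⟨m2, _, he⟩ := Finset.mem_image.1 hx2
        apply hij
        have h1 := hmodB i m1
        have h2 := hmodB j m2
        rw [he] at h2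
        exact Fin.val_injective (h1.symm.trans h2)
    set g : Fin r → ℕ := fun k => B.orderEmbOfFin hBcard k with hg
    have hgmono : StrictMono g := (B.orderEmbOfFin hBcard).strictMono
    have hgmem : ∀ k, g k ∈ B := fun k => Finset.orderEmbOfFin_mem B hBcard k
    have hge : ∀ k : Fin r, (k : ℕ) ≤ g k := by
      intro k
      have := strictMono_add_le hgmono (k : ℕ) ⟨0, by omega⟩ k (by simp)
      omega
    have hlast : ∀ k : Fin r, g k + (r - 1 - (k : ℕ)) ≤ g ⟨r - 1, by omega⟩ := by
      intro k
      exact strictMono_add_le hgmono (r - 1 - (k : ℕ)) k ⟨r - 1, by omega⟩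
        (by simp; omega)
    have hmax : g ⟨r - 1, by omega⟩ < r + s :=
      Finset.mem_range.1 (hBsub (hgmem _))
    set lam : Fin r → ℕ := fun i => g i.rev - ((r : ℕ) - 1 - (i : ℕ)) with hlam
    have hrev : ∀ i : Fin r, (i.rev : ℕ) = r - 1 - (i : ℕ) := by
      intro i
      rw [Fin.val_rev]
      omega
    have hlam_add : ∀ i : Fin r, lam i + ((r : ℕ) - 1 - (i : ℕ)) = g i.rev := by
      intro i
      have h1 := hge i.rev
      rw [hrev i] at h1
      simp only [hlam]
      omega
    have hbeta : betaSet r lam = B := by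
      have himg : betaSet r lam = Finset.univ.image (fun i : Fin r => g i.rev) := by
        rw [betaSet]
        apply Finset.image_congr
        intro i _
        exact hlam_add i
      rw [himg]
      have h1 : Finset.univ.image (fun i : Fin r => g i.rev) = Finset.univ.image g := by
        apply Finset.Subset.antisymm
        · intro x hx
          obtain ⟨i, _, rfl⟩ := Finset.mem_image.1 hx
          exact Finset.mem_image.2 ⟨i.rev, Finset.mem_univ _, rfl⟩
        · intro x hx
          obtain ⟨i, _, rfl⟩ := Finset.mem_image.1 hx
          exact Finset.mem_image.2 ⟨i.rev, Finset.mem_univ _, by rw [Fin.rev_rev]⟩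
      rw [h1]
      apply Finset.eq_of_subset_of_card_le
      · intro x hx
        obtain ⟨i, _, rfl⟩ := Finset.mem_image.1 hx
        exact hgmem i
      · rw [Finset.card_image_of_injective _ hgmono.injective, Finset.card_univ,
          Fintype.card_fin, hBcard]
    have hrect : IsRectPartition r s lam := by
      constructor
      · intro i j hij
        have hij' : (i : ℕ) ≤ (j : ℕ) := hij
        have h3 := hrev i
        have h4 := hrev j
        have h5 := j.isLt
        have hpq : (j.rev : ℕ) + ((i.rev : ℕ) - (j.rev : ℕ)) ≤ (i.rev : ℕ) := by omega
        have h1 := strictMono_add_le hgmono _ j.rev i.rev hpq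
        have h2 := hge j.rev
        show g j.rev - ((r : ℕ) - 1 - (j : ℕ)) ≤ g i.rev - ((r : ℕ) - 1 - (i : ℕ))
        omega
      · intro i
        have h1 := hlast i.rev
        have h2 := hge i.rev
        have h3 := hrev i
        have h4 := i.isLt
        show g i.rev - ((r : ℕ) - 1 - (i : ℕ)) ≤ s
        omega
    have hcore : IsTCore r t lam := by
      intro b hb hbt
      rw [hbeta] at hb ⊢
      obtain ⟨i, m, hm, rfl⟩ := (hmemB _).1 hb
      rcases Nat.eq_zero_or_pos m with h0 | h0
      · exfalso
        subst h0
        simp only [Nat.zero_mul, Nat.add_zero] at hbt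
        have := i.isLt
        omega
      · have hsub : (i : ℕ) + m * t - t = (i : ℕ) + (m - 1) * t := by
          have hmt : (m - 1) * t = m * t - t := Nat.sub_one_mul m t
          have hmt2 : t ≤ m * t := Nat.le_mul_of_pos_left t h0
          omega
        rw [hsub]
        exact (hmemB _).2 ⟨i, m - 1, by omega, rfl⟩
    refine ⟨lam, ⟨hrect, hcore⟩, ?_⟩
    funext i
    have hfil : (betaSet r lam).filter (fun b => b % t = (i : ℕ)) =
        (Finset.range (a i)).image (fun m => (i : ℕ) + m * t) := by
      rw [hbeta]
      ext b
      simp only [Finset.mem_filter, Finset.mem_image, Finset.mem_range]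
      constructor
      · rintro ⟨hb, hmod⟩
        obtain ⟨j, m, hm, rfl⟩ := (hmemB b).1 hb
        have := hmodB j m
        have hji : j = i := Fin.val_injective (by omega)
        subst hji
        exact ⟨m, hm, rfl⟩
      · rintro ⟨m, hm, rfl⟩
        exact ⟨(hmemB _).2 ⟨i, m, hm, rfl⟩, hmodB i m⟩
    show aCount r t lam (i : ℕ) = a i
    rw [aCount, hfil, Finset.card_image_of_injective _ (hinjm i), Finset.card_range]
end

section
/- Fix integers r, s ≥ 1 and t ≥ 2, and let P^t_{r,s} denote the number of t-cores in Par_{r,s}. Then P^t_{r,s} equals the coefficient of q^r in the polynomial ∏_{i=0}^{t−1} (1 + q + q^2 + ... + q^{n_i}). -/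
/-!
`λ ↦ β(λ)` identifies the partitions in the `r × s` rectangle with the `r`-element subsets of
`{0, …, r + s - 1}`, and `λ` is a `t`-core exactly when `β(λ)` is closed under `b ↦ b - t`.
A closed set is determined by its residue counts mod `t`: in the class of `i` it consists of the
`a_i` smallest elements. Conversely any counts with `a_i ≤ n_i` and `∑ a_i = r` arise, and these
tuples are what the coefficient of `q^r` in `∏ (1 + q + ⋯ + q^{n_i})` counts.
-/

open Finset

open Polynomial in
theorem coeff_prod_sum_X_pow {R ι : Type*} [CommSemiring R] [DecidableEq ι] (s : Finset ι)
    (n : ι → ℕ) (d : ℕ) :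
    (∏ i ∈ s, ∑ j ∈ range (n i + 1), (X : R[X]) ^ j).coeff d =
      #{l ∈ s.finsuppAntidiag d | ∀ i ∈ s, l i ≤ n i} := by
  rw [← coeff_coe, ← coeToPowerSeries.ringHom_apply, map_prod, PowerSeries.coeff_prod]
  simp [PowerSeries.coeff_X_pow, prod_boole]

theorem add_mul_lt_iff_lt_div {i t : ℕ} (hi : i < t) (m N : ℕ) :
    i + m * t < N ↔ m < (N + t - 1 - i) / t := by
  rw [Nat.lt_div_iff_mul_lt (by omega)]
  omega

theorem card_filter_mod_eq_and_div_lt {i t : ℕ} (hi : i < t) (N k : ℕ) :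
    #{b ∈ range N | b % t = i ∧ b / t < k} = min k ((N + t - 1 - i) / t) := by
  have ht : 0 < t := by omega
  rw [← card_range (min k _)]
  refine card_nbij' (· / t) (i + · * t) ?_ ?_ ?_ ?_
  · intro b hb
    simp only [coe_filter, mem_range, Set.mem_ofPred_eq, coe_range, Set.mem_Iio, lt_min_iff] at hb ⊢
    refine ⟨hb.2.2, (add_mul_lt_iff_lt_div hi _ _).1 ?_⟩
    rw [← hb.2.1, Nat.mod_add_div']
    exact hb.1
  · intro m hm
    simp only [coe_filter, mem_range, Set.mem_ofPred_eq, coe_range, Set.mem_Iio, lt_min_iff] at hm ⊢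
    simp [(add_mul_lt_iff_lt_div hi _ _).2 hm.2, Nat.add_mul_div_right _ _ ht, Nat.div_eq_of_lt hi,
      Nat.mod_eq_of_lt hi, hm.1]
  · intro b hb
    simp only [coe_filter, Set.mem_ofPred_eq] at hb
    simp only [← hb.2.1, Nat.mod_add_div']
  · intro m _
    simp [Nat.add_mul_div_right _ _ ht, Nat.div_eq_of_lt hi]

def IsClosedUnderSub (t : ℕ) (B : Finset ℕ) : Prop :=
  ∀ b ∈ B, t ≤ b → b - t ∈ B

instance (t : ℕ) : DecidablePred (IsClosedUnderSub t) :=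
  fun _ => inferInstanceAs (Decidable (∀ _ ∈ _, _))

namespace IsClosedUnderSub

variable {t : ℕ} {B : Finset ℕ}

theorem add_mul_mem (hB : IsClosedUnderSub t B) {i m k : ℕ} (h : i + (m + k) * t ∈ B) :
    i + m * t ∈ B := by
  induction k with
  | zero => simpa using h
  | succ k ih =>
    refine ih ?_
    have := hB _ h (by nlinarith)
    rwa [show i + (m + (k + 1)) * t - t = i + (m + k) * t by
      rw [← add_assoc, add_one_mul]; omega] at this

theorem mem_iff_div_lt_card (hB : IsClosedUnderSub t B) (ht : 0 < t) (b : ℕ) :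
    b ∈ B ↔ b / t < #{c ∈ B | c % t = b % t} := by
  set i := b % t
  set M := {c ∈ B | c % t = i}.image (· / t)
  have hM : ∀ m, m ∈ M ↔ i + m * t ∈ B := by
    intro m
    simp only [M, mem_image, mem_filter]
    constructor
    · rintro ⟨c, ⟨hc, hci⟩, rfl⟩
      rwa [← hci, Nat.mod_add_div']
    · intro h
      refine ⟨_, ⟨h, ?_⟩, ?_⟩ <;>
        simp [Nat.add_mul_div_right _ _ ht, Nat.mod_eq_of_lt (Nat.mod_lt b ht), i,
          Nat.div_eq_of_lt (Nat.mod_lt b ht)]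
  have hlower : IsLowerSet (M : Set ℕ) := by
    intro m' m hle hm'
    rw [mem_coe, hM] at hm' ⊢
    exact hB.add_mul_mem (k := m' - m) (by rwa [Nat.add_sub_cancel' hle])
  obtain ⟨a, ha⟩ :=
    hlower.eq_univ_or_Iio.resolve_left fun h => Set.infinite_univ (h ▸ M.finite_toSet)
  have hMa : M = range a := by rw [← coe_inj, coe_range, ha]
  have hcard : #M = #{c ∈ B | c % t = i} := by
    refine card_image_of_injOn fun c hc c' hc' h => ?_
    simp only [coe_filter, Set.mem_ofPred_eq] at hc hc'
    rw [← Nat.mod_add_div' c t, ← Nat.mod_add_div' c' t, hc.2, hc'.2, show c / t = c' / t from h]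
  rw [← hcard, hMa, card_range, ← mem_range, ← hMa, hM, Nat.mod_add_div']

end IsClosedUnderSub

noncomputable def residueCounts (t : ℕ) (B : Finset ℕ) : ℕ →₀ ℕ :=
  Multiset.toFinsupp (B.val.map (· % t))

def fillResidues (N t : ℕ) (l : ℕ →₀ ℕ) : Finset ℕ :=
  {b ∈ range N | b / t < l (b % t)}

section ResidueCounts

variable {N t : ℕ} {B : Finset ℕ}

theorem residueCounts_apply (i : ℕ) : residueCounts t B i = #{b ∈ B | b % t = i} := by
  rw [residueCounts, Multiset.toFinsupp_apply, Multiset.count_map]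
  simp_rw [eq_comm (a := i)]
  rfl

theorem support_residueCounts_subset (ht : 0 < t) : (residueCounts t B).support ⊆ range t := by
  intro i hi
  obtain ⟨b, -, rfl⟩ : ∃ b ∈ B, b % t = i := by
    simpa [residueCounts_apply, filter_nonempty_iff, ← nonempty_iff_ne_empty] using hi
  exact mem_range.2 (Nat.mod_lt b ht)

theorem sum_residueCounts (ht : 0 < t) : ∑ i ∈ range t, residueCounts t B i = #B := by
  simp only [residueCounts_apply]
  exact (card_eq_sum_card_fiberwise fun b _ => mem_range.2 (Nat.mod_lt b ht)).symm

theorem residueCounts_le {i : ℕ} (hBN : B ⊆ range N) (hi : i < t) :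
    residueCounts t B i ≤ (N + t - 1 - i) / t := by
  calc residueCounts t B i ≤ #{b ∈ range N | b % t = i ∧ b / t < N} := by
        rw [residueCounts_apply]
        refine card_le_card fun b hb => ?_
        have hbN := mem_range.1 (hBN (mem_filter.1 hb).1)
        simp only [mem_filter, mem_range] at hb ⊢
        exact ⟨hbN, hb.2, (Nat.div_le_self b t).trans_lt hbN⟩
    _ ≤ _ := by rw [card_filter_mod_eq_and_div_lt hi]; exact min_le_right _ _

theorem isClosedUnderSub_fillResidues (ht : 0 < t) (l : ℕ →₀ ℕ) :
    IsClosedUnderSub t (fillResidues N t l) := by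
  intro b hb htb
  simp only [fillResidues, mem_filter, mem_range] at hb ⊢
  rw [← Nat.mod_eq_sub_mod htb]
  have := Nat.div_eq_sub_div ht htb
  omega

theorem residueCounts_fillResidues {l : ℕ →₀ ℕ} {i : ℕ} (hi : i < t)
    (hl : l i ≤ (N + t - 1 - i) / t) : residueCounts t (fillResidues N t l) i = l i := by
  rw [residueCounts_apply, fillResidues, filter_filter, ← min_eq_left hl,
    ← card_filter_mod_eq_and_div_lt hi]
  congr 1
  refine filter_congr fun b _ => ?_
  constructor
  · rintro ⟨hb, rfl⟩; exact ⟨rfl, hb⟩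
  · rintro ⟨rfl, hb⟩; exact ⟨hb, rfl⟩

theorem fillResidues_residueCounts (ht : 0 < t) (hB : IsClosedUnderSub t B) (hBN : B ⊆ range N) :
    fillResidues N t (residueCounts t B) = B := by
  ext b
  rw [fillResidues, mem_filter, residueCounts_apply, ← hB.mem_iff_div_lt_card ht]
  exact and_iff_right_of_imp fun hb => hBN hb

end ResidueCounts

theorem card_filter_isClosedUnderSub {t : ℕ} (ht : 0 < t) (N r : ℕ) :
    #{B ∈ powersetCard r (range N) | IsClosedUnderSub t B} =
      #{l ∈ (range t).finsuppAntidiag r | ∀ i ∈ range t, l i ≤ (N + t - 1 - i) / t} := by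
  refine card_nbij' (residueCounts t) (fillResidues N t) ?_ ?_ ?_ ?_
  · intro B hB
    simp only [coe_filter, mem_powersetCard, Set.mem_ofPred_eq, mem_finsuppAntidiag] at hB ⊢
    exact ⟨⟨by rw [sum_residueCounts ht, hB.1.2], support_residueCounts_subset ht⟩,
      fun i hi => residueCounts_le hB.1.1 (mem_range.1 hi)⟩
  · intro l hl
    simp only [coe_filter, mem_powersetCard, Set.mem_ofPred_eq, mem_finsuppAntidiag] at hl ⊢
    refine ⟨⟨filter_subset _ _, ?_⟩, isClosedUnderSub_fillResidues ht l⟩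
    rw [← sum_residueCounts ht, ← hl.1.1]
    exact sum_congr rfl fun i hi => residueCounts_fillResidues (mem_range.1 hi) (hl.2 i hi)
  · intro B hB
    simp only [coe_filter, mem_powersetCard, Set.mem_ofPred_eq] at hB
    exact fillResidues_residueCounts ht hB.2 hB.1.1
  · intro l hl
    simp only [coe_filter, Set.mem_ofPred_eq, mem_finsuppAntidiag] at hl
    ext i
    by_cases hi : i < t
    · exact residueCounts_fillResidues hi (hl.2 i (mem_range.2 hi))
    · have hsupp {f : ℕ →₀ ℕ} (hf : f.support ⊆ range t) : f i = 0 :=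
        Finsupp.notMem_support_iff.1 fun h => hi (mem_range.1 (hf h))
      rw [hsupp hl.1.2, hsupp (support_residueCounts_subset ht)]

theorem StrictMono.apply_add_sub_le {n : ℕ} {f : Fin n → ℕ} (hf : StrictMono f) {j k : Fin n}
    (hjk : j ≤ k) : f j + (k - j) ≤ f k := by
  obtain ⟨d, hd⟩ : ∃ d, (k : ℕ) = j + d := ⟨k - j, by omega⟩
  induction d generalizing k with
  | zero => rw [show k = j from Fin.ext (by omega)]; omega
  | succ d ih =>
    have hk' : (j : ℕ) + d < n := by omega
    have := ih (k := ⟨j + d, hk'⟩) (Fin.le_def.2 (by simp)) rfl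
    have := hf (show (⟨j + d, hk'⟩ : Fin n) < k from Fin.lt_def.2 (by simp; omega))
    simp only at *
    omega

section BetaSet

variable {r s : ℕ} {lam : Fin r → ℕ}

theorem betaSet_eq_image_rev (r : ℕ) (lam : Fin r → ℕ) :
    betaSet r lam = univ.image fun j : Fin r => lam j.rev + j := by
  conv_rhs => rw [← image_univ_equiv Fin.revPerm, image_image]
  refine congrArg (image · univ) (funext fun i => ?_)
  simp [Fin.val_rev]
  omega

theorem strictMono_rev_add (hlam : Antitone lam) : StrictMono fun j : Fin r => lam j.rev + j :=
  fun _ _ hjk => add_lt_add_of_le_of_lt (hlam (Fin.rev_le_rev.2 hjk.le)) hjk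

theorem card_betaSet (hlam : Antitone lam) : #(betaSet r lam) = r := by
  rw [betaSet_eq_image_rev, card_image_of_injective _ (strictMono_rev_add hlam).injective,
    card_univ, Fintype.card_fin]

theorem betaSet_subset_range (hlam : ∀ i, lam i ≤ s) : betaSet r lam ⊆ range (r + s) := by
  intro b hb
  obtain ⟨i, -, rfl⟩ := mem_image.1 hb
  have := hlam i
  exact mem_range.2 (by omega)

theorem orderEmbOfFin_betaSet {B : Finset ℕ} (hlam : Antitone lam) (hB : betaSet r lam = B)
    (hc : #B = r) (j : Fin r) : B.orderEmbOfFin hc j = lam j.rev + j := by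
  subst hB
  refine congrFun (orderEmbOfFin_unique hc (fun j => ?_) (strictMono_rev_add hlam)).symm j
  rw [betaSet_eq_image_rev]
  exact mem_image_of_mem _ (mem_univ j)

theorem betaSet_injOn : Set.InjOn (betaSet r) {lam | Antitone lam} := by
  intro lam hlam mu hmu h
  funext i
  have hc := card_betaSet hmu
  have h1 := orderEmbOfFin_betaSet hlam h hc i.rev
  have h2 := orderEmbOfFin_betaSet hmu rfl hc i.rev
  rw [Fin.rev_rev] at h1 h2
  omega

theorem exists_isRectPartition_betaSet_eq {B : Finset ℕ} (hB : B ⊆ range (r + s)) (hc : #B = r) :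
    ∃ lam, IsRectPartition r s lam ∧ betaSet r lam = B := by
  set e := B.orderEmbOfFin hc with he
  have hgap : ∀ {j k : Fin r}, j ≤ k → e j + (k - j) ≤ e k :=
    StrictMono.apply_add_sub_le e.strictMono
  have hle : ∀ j : Fin r, (j : ℕ) ≤ e j := fun j => by
    have := hgap (show (⟨0, j.pos⟩ : Fin r) ≤ j from Fin.le_def.2 (Nat.zero_le _))
    simp only at this
    omega
  refine ⟨fun i => e i.rev - i.rev, ⟨fun i i' hii' => ?_, fun i => ?_⟩, ?_⟩
  · have := hgap (Fin.rev_le_rev.2 hii')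
    have := hle i'.rev
    dsimp only
    omega
  · have hr : r - 1 < r := Nat.sub_one_lt_of_lt i.isLt
    have := hgap (show i.rev ≤ ⟨r - 1, hr⟩ from Fin.le_def.2 (by simp; omega))
    have htop : e ⟨r - 1, hr⟩ ∈ B := B.orderEmbOfFin_mem hc _
    have := mem_range.1 (hB htop)
    have := hle i.rev
    dsimp only at *
    omega
  · rw [betaSet_eq_image_rev, ← B.image_orderEmbOfFin_univ hc, ← he]
    refine congrArg (image · univ) (funext fun j => ?_)
    have := hle j
    simp only [Fin.rev_rev]
    omega

end BetaSet

theorem ncard_isRectPartition_and_betaSet (r s : ℕ) (p : Finset ℕ → Prop) [DecidablePred p] :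
    {lam : Fin r → ℕ | IsRectPartition r s lam ∧ p (betaSet r lam)}.ncard =
      #{B ∈ powersetCard r (range (r + s)) | p B} := by
  rw [← Set.ncard_coe_finset]
  refine Set.ncard_congr (fun lam _ => betaSet r lam) ?_ ?_ ?_
  · rintro lam ⟨⟨hanti, hle⟩, hp⟩
    simp only [coe_filter, mem_powersetCard, Set.mem_ofPred_eq]
    exact ⟨⟨betaSet_subset_range hle, card_betaSet hanti⟩, hp⟩
  · exact fun lam mu hlam hmu => betaSet_injOn hlam.1.1 hmu.1.1
  · intro B hB
    simp only [coe_filter, mem_powersetCard, Set.mem_ofPred_eq] at hB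
    obtain ⟨lam, hlam, rfl⟩ := exists_isRectPartition_betaSet_eq hB.1.1 hB.1.2
    exact ⟨lam, ⟨hlam, hB.2⟩, rfl⟩

theorem ncard_tcores_eq_coeff_general (r s t : ℕ) (ht : 2 ≤ t) :
    {lam : Fin r → ℕ | IsRectPartition r s lam ∧ IsTCore r t lam}.ncard =
      (∏ i ∈ Finset.range t,
        ∑ j ∈ Finset.range (nres r s t i + 1), (Polynomial.X : Polynomial ℕ) ^ j).coeff r := by
  rw [coeff_prod_sum_X_pow, Nat.cast_id]
  exact (ncard_isRectPartition_and_betaSet r s (IsClosedUnderSub t)).trans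
    (card_filter_isClosedUnderSub (by omega) (r + s) r)

/-- The number of `t`-cores in `Par_{r,s}` is the coefficient of `q^r` in
`∏_{i=0}^{t−1} (1 + q + ⋯ + q^{n_i})`. -/
theorem ncard_tcores_eq_coeff (r s t : ℕ) (hr : 1 ≤ r) (hs : 1 ≤ s) (ht : 2 ≤ t) :
    {lam : Fin r → ℕ | IsRectPartition r s lam ∧ IsTCore r t lam}.ncard =
      (∏ i ∈ Finset.range t,
        ∑ j ∈ Finset.range (nres r s t i + 1), (Polynomial.X : Polynomial ℕ) ^ j).coeff r :=
  ncard_tcores_eq_coeff_general r s t ht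
end
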